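/- In the twisted q-Yangian Y_q^{tw}(\mathfrak{o}_n), for 1 \le i < j < n the relations [s_{ij}(u), s_{j+1,j}^{(0)}]_q = (q^{-1}-q)\, s_{i,j+1}(u) and [s_{ji}(u), s_{j+1,j}^{(0)}]_q = (q^{-1}-q)\, s_{j+1,i}(u) follow from the reflection-equation defining relations (2.15), where [x,y]_q = xy - qyx. -/

import Mathlib

/-!
Read (2.15) at the lowest non-trivial power of `v`. Since `s_{ab}(v)` has no positive powers
of `v`, the `α`-coefficients of `v`-mode `-2` vanish and those of mode `-1` involve only the
zero modes `s^{(0)}_{ab}`, so that coefficient is a linear relation among products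
`s(u) s^{(0)}`. For `i < j < k` and the indices `(i, k, j, j)`, resp. `(j, k, i, j)`, the
triangularity `s^{(0)}_{ij} = 0`, `s^{(0)}_{jj} = 1` leaves exactly the three terms of the
`q`-commutator identity.
-/

/-- The coefficient of `u^{-m} v^{-l}` in the series
`α_{ijab}(u,v) = (q^{-δ_{aj}} - q^{δ_{aj}} uv) s_{ia}(u) s_{jb}(v)
  + (q⁻¹ - q)(δ_{j<a} + uv δ_{a<j}) s_{ij}(u) s_{ab}(v)`,
where `s i j : ℤ → A` records the coefficients `s_{ij}^{(r)}` of
`s_{ij}(u) = ∑_{r ≥ 0} s_{ij}^{(r)} u^{-r}` (extended by zero to negative `r`). -/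
noncomputable def alphaCoeff {A : Type*} [Ring A] [Algebra (RatFunc ℂ) A]
    (q : RatFunc ℂ) {n : ℕ} (s : Fin n → Fin n → ℤ → A)
    (i j a b : Fin n) (m l : ℤ) : A :=
  (if a = j then q⁻¹ else 1) • (s i a m * s j b l)
  - (if a = j then q else 1) • (s i a (m + 1) * s j b (l + 1))
  + (q⁻¹ - q) • ((if j < a then s i j m * s a b l else 0)
      + (if a < j then s i j (m + 1) * s a b (l + 1) else 0))

def qCommutator {R A : Type*} [Ring A] [SMul R A] (q : R) (x y : A) : A := x * y - q • (y * x)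

section ReflectionRelation

variable {A : Type*} [Ring A] [Algebra (RatFunc ℂ) A] (q : RatFunc ℂ) {n : ℕ}
  (s : Fin n → Fin n → ℤ → A)

/-- The defining relation (2.15), coefficientwise. -/
def ReflectionRelation : Prop :=
  ∀ i j a b : Fin n, ∀ m l : ℤ,
    (if i = j then q⁻¹ else 1) • alphaCoeff q s i j a b (m + 1) l
      - (if i = j then q else 1) • alphaCoeff q s i j a b m (l + 1)
      + (q⁻¹ - q) • ((if j < i then alphaCoeff q s j i a b (m + 1) l else 0)
          + (if i < j then alphaCoeff q s j i a b m (l + 1) else 0))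
    = (if a = b then q⁻¹ else 1) • alphaCoeff q s j i b a l (m + 1)
      - (if a = b then q else 1) • alphaCoeff q s j i b a (l + 1) m
      + (q⁻¹ - q) • ((if a < b then alphaCoeff q s j i a b l (m + 1) else 0)
          + (if b < a then alphaCoeff q s j i a b (l + 1) m else 0))

variable {q s}

lemma alphaCoeff_neg_two_right (hneg : ∀ i j : Fin n, ∀ r : ℤ, r < 0 → s i j r = 0)
    (i j a b : Fin n) (m : ℤ) : alphaCoeff q s i j a b m (-2) = 0 := by
  simp [alphaCoeff, hneg _ _ (-1) (by norm_num), hneg _ _ (-2) (by norm_num),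
    show (-2 : ℤ) + 1 = -1 by norm_num]

lemma alphaCoeff_neg_two_left (hneg : ∀ i j : Fin n, ∀ r : ℤ, r < 0 → s i j r = 0)
    (i j a b : Fin n) (l : ℤ) : alphaCoeff q s i j a b (-2) l = 0 := by
  simp [alphaCoeff, hneg _ _ (-1) (by norm_num), hneg _ _ (-2) (by norm_num),
    show (-2 : ℤ) + 1 = -1 by norm_num]

lemma alphaCoeff_neg_one_right (hneg : ∀ i j : Fin n, ∀ r : ℤ, r < 0 → s i j r = 0)
    (i j a b : Fin n) (m : ℤ) :
    alphaCoeff q s i j a b m (-1)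
      = -((if a = j then q else 1) • (s i a (m + 1) * s j b 0))
        + (q⁻¹ - q) • (if a < j then s i j (m + 1) * s a b 0 else 0) := by
  simp [alphaCoeff, hneg _ _ (-1) (by norm_num)]

lemma alphaCoeff_neg_one_left (hneg : ∀ i j : Fin n, ∀ r : ℤ, r < 0 → s i j r = 0)
    (i j a b : Fin n) (l : ℤ) :
    alphaCoeff q s i j a b (-1) l
      = -((if a = j then q else 1) • (s i a 0 * s j b (l + 1)))
        + (q⁻¹ - q) • (if a < j then s i j 0 * s a b (l + 1) else 0) := by
  simp [alphaCoeff, hneg _ _ (-1) (by norm_num)]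

lemma ReflectionRelation.lowest_mode (hrel : ReflectionRelation q s)
    (hneg : ∀ i j : Fin n, ∀ r : ℤ, r < 0 → s i j r = 0) (i j a b : Fin n) (m : ℤ) :
    -((if i = j then q else 1) • alphaCoeff q s i j a b m (-1))
      + (q⁻¹ - q) • (if i < j then alphaCoeff q s j i a b m (-1) else 0)
    = -((if a = b then q else 1) • alphaCoeff q s j i b a (-1) m)
      + (q⁻¹ - q) • (if b < a then alphaCoeff q s j i a b (-1) m else 0) := by
  have h := hrel i j a b m (-2)
  simp only [alphaCoeff_neg_two_right hneg, alphaCoeff_neg_two_left hneg,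
    show (-2 : ℤ) + 1 = -1 by norm_num, smul_zero, ite_self, zero_add, zero_sub] at h
  simpa only [sub_eq_neg_add] using h

lemma ReflectionRelation.qCommutator_upper (hrel : ReflectionRelation q s)
    (hneg : ∀ i j : Fin n, ∀ r : ℤ, r < 0 → s i j r = 0)
    (h0lt : ∀ i j : Fin n, i < j → s i j 0 = 0) (h0diag : ∀ i : Fin n, s i i 0 = 1)
    {i j k : Fin n} (hij : i < j) (hjk : j < k) (m : ℤ) :
    qCommutator q (s i j m) (s k j 0) = (q⁻¹ - q) • s i k m := by
  have h := hrel.lowest_mode hneg i k j j (m - 1)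
  simp only [alphaCoeff_neg_one_right hneg, alphaCoeff_neg_one_left hneg, sub_add_cancel,
    (hij.trans hjk).ne, hjk.ne, hij.ne', hjk, hij.not_gt, lt_irrefl, h0lt i j hij, h0diag, if_true,
    if_false, ite_self, one_smul, mul_zero, mul_one, neg_zero, smul_zero, smul_neg, add_zero] at h
  rw [qCommutator, ← sub_eq_zero, ← sub_eq_zero.mpr h]
  abel

lemma ReflectionRelation.qCommutator_lower (hrel : ReflectionRelation q s)
    (hneg : ∀ i j : Fin n, ∀ r : ℤ, r < 0 → s i j r = 0)
    (h0lt : ∀ i j : Fin n, i < j → s i j 0 = 0) (h0diag : ∀ i : Fin n, s i i 0 = 1)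
    {i j k : Fin n} (hij : i < j) (hjk : j < k) (m : ℤ) :
    qCommutator q (s j i m) (s k j 0) = (q⁻¹ - q) • s k i m := by
  have h := hrel.lowest_mode hneg j k i j (m - 1)
  simp only [alphaCoeff_neg_one_right hneg, alphaCoeff_neg_one_left hneg, sub_add_cancel,
    (hij.trans hjk).ne, hjk.ne, hij.ne, hjk, hij, hij.trans hjk, hij.not_gt, lt_irrefl,
    h0lt i j hij, h0diag, if_true, if_false, ite_self, one_smul, mul_zero, mul_one, smul_zero,
    smul_neg, add_zero] at h
  rw [qCommutator, ← sub_eq_zero, ← sub_eq_zero.mpr h]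
  abel

end ReflectionRelation

theorem zero_mode_relations_general {A : Type*} [Ring A] [Algebra (RatFunc ℂ) A]
    (q : RatFunc ℂ) {n : ℕ}
    (s : Fin n → Fin n → ℤ → A)
    (hneg : ∀ i j : Fin n, ∀ r : ℤ, r < 0 → s i j r = 0)
    (h0lt : ∀ i j : Fin n, i < j → s i j 0 = 0)
    (h0diag : ∀ i : Fin n, s i i 0 = 1)
    (hrel : ∀ i j a b : Fin n, ∀ m l : ℤ,
      (if i = j then q⁻¹ else 1) • alphaCoeff q s i j a b (m + 1) l
        - (if i = j then q else 1) • alphaCoeff q s i j a b m (l + 1)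
        + (q⁻¹ - q) • ((if j < i then alphaCoeff q s j i a b (m + 1) l else 0)
            + (if i < j then alphaCoeff q s j i a b m (l + 1) else 0))
      = (if a = b then q⁻¹ else 1) • alphaCoeff q s j i b a l (m + 1)
        - (if a = b then q else 1) • alphaCoeff q s j i b a (l + 1) m
        + (q⁻¹ - q) • ((if a < b then alphaCoeff q s j i a b l (m + 1) else 0)
            + (if b < a then alphaCoeff q s j i a b (l + 1) m else 0))) :
    ∀ (i j : Fin n) (hj : (j : ℕ) + 1 < n), i < j → ∀ m : ℤ,
      (s i j m * s ⟨(j : ℕ) + 1, hj⟩ j 0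
          - q • (s ⟨(j : ℕ) + 1, hj⟩ j 0 * s i j m)
        = (q⁻¹ - q) • s i ⟨(j : ℕ) + 1, hj⟩ m)
      ∧ (s j i m * s ⟨(j : ℕ) + 1, hj⟩ j 0
          - q • (s ⟨(j : ℕ) + 1, hj⟩ j 0 * s j i m)
        = (q⁻¹ - q) • s ⟨(j : ℕ) + 1, hj⟩ i m) := by
  intro i j hj hij m
  have hjk : j < ⟨(j : ℕ) + 1, hj⟩ := Nat.lt_add_one (j : ℕ)
  exact ⟨ReflectionRelation.qCommutator_upper hrel hneg h0lt h0diag hij hjk m,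
    ReflectionRelation.qCommutator_lower hrel hneg h0lt h0diag hij hjk m⟩

/-- In the twisted q-Yangian `Y_q^tw(𝔬_n)` (presented by the coefficientwise
form of the reflection-equation relation (2.15), together with
`s_{ij}^{(0)} = 0` for `i < j` and `s_{ii}^{(0)} = 1`), for `i < j` with
`j + 1 < n` one has `[s_{ij}(u), s_{j+1,j}^{(0)}]_q = (q⁻¹-q) s_{i,j+1}(u)` and
`[s_{ji}(u), s_{j+1,j}^{(0)}]_q = (q⁻¹-q) s_{j+1,i}(u)`, coefficientwise. -/
theorem zero_mode_relations {A : Type*} [Ring A] [Algebra (RatFunc ℂ) A]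
    (q : RatFunc ℂ) (hq : q = RatFunc.X) {n : ℕ}
    (s : Fin n → Fin n → ℤ → A)
    (hneg : ∀ i j : Fin n, ∀ r : ℤ, r < 0 → s i j r = 0)
    (h0lt : ∀ i j : Fin n, i < j → s i j 0 = 0)
    (h0diag : ∀ i : Fin n, s i i 0 = 1)
    (hrel : ∀ i j a b : Fin n, ∀ m l : ℤ,
      (if i = j then q⁻¹ else 1) • alphaCoeff q s i j a b (m + 1) l
        - (if i = j then q else 1) • alphaCoeff q s i j a b m (l + 1)
        + (q⁻¹ - q) • ((if j < i then alphaCoeff q s j i a b (m + 1) l else 0)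
            + (if i < j then alphaCoeff q s j i a b m (l + 1) else 0))
      = (if a = b then q⁻¹ else 1) • alphaCoeff q s j i b a l (m + 1)
        - (if a = b then q else 1) • alphaCoeff q s j i b a (l + 1) m
        + (q⁻¹ - q) • ((if a < b then alphaCoeff q s j i a b l (m + 1) else 0)
            + (if b < a then alphaCoeff q s j i a b (l + 1) m else 0))) :
    ∀ (i j : Fin n) (hj : (j : ℕ) + 1 < n), i < j → ∀ m : ℤ,
      (s i j m * s ⟨(j : ℕ) + 1, hj⟩ j 0
          - q • (s ⟨(j : ℕ) + 1, hj⟩ j 0 * s i j m)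
        = (q⁻¹ - q) • s i ⟨(j : ℕ) + 1, hj⟩ m)
      ∧ (s j i m * s ⟨(j : ℕ) + 1, hj⟩ j 0
          - q • (s ⟨(j : ℕ) + 1, hj⟩ j 0 * s j i m)
        = (q⁻¹ - q) • s ⟨(j : ℕ) + 1, hj⟩ i m) :=
  zero_mode_relations_general q s hneg h0lt h0diag hrel
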